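/- With A row-regular, p nonzero, q all finite, and Δ = max_i(p_i - max_j(a_{ij}+q_j)): if x and y are finite vectors both achieving the minimum Δ of f(z) = max_j(z_j - q_j) + max_i(p_i - max_j(a_{ij}+z_j)), then the componentwise maximum x ∨ y also achieves the minimum Δ. -/

import Mathlib

/-- The max-plus objective `q⁻ x (A x)⁻ p`. -/
noncomputable def tropObj (m n : ℕ) (a : Matrix (Fin m) (Fin n) EReal)
    (p : Fin m → EReal) (q x : Fin n → ℝ) : EReal :=
  (⨆ j, ((x j - q j : ℝ) : EReal)) +
    ⨆ i, (p i - ⨆ j, (a i j + ((x j : ℝ) : EReal)))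

/-- The minimum value `Δ = (A q)⁻ p`. -/
noncomputable def tropDelta (m n : ℕ) (a : Matrix (Fin m) (Fin n) EReal)
    (p : Fin m → EReal) (q : Fin n → ℝ) : EReal :=
  ⨆ i, (p i - ⨆ j, (a i j + ((q j : ℝ) : EReal)))

/-!
Write `f(z) = S(z) + R(z)` with `S(z) = max_j (z_j - q_j)` and `R(z) = max_i (p_i - (A z)_i)`, so
that `Δ = R(q)`. As `R` is antitone and `R(z + s) = R(z) - s` for real `s`, the bound
`z ≤ q + S(z)` gives `Δ ≤ f(z)` for every `z`. On the other hand `S(x ∨ y) = max (S x) (S y)`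
while `R(x ∨ y) ≤ min (R x) (R y)`, so `f(x ∨ y) ≤ max (f x) (f y)`.
-/

lemma EReal.sub_add_coe_add_coe (p b : EReal) (s : ℝ) : p - (b + s) + s = p - b := by
  rw [sub_eq_add_neg, EReal.neg_add (.inr (EReal.coe_ne_top s)) (.inr (EReal.coe_ne_bot s)),
    ← add_sub_assoc, EReal.sub_add_cancel, sub_eq_add_neg]

section Residual

variable {ι κ : Type*} (a : Matrix ι κ EReal) (p : ι → EReal)

/-- The residual `(A z)⁻ p`. -/
noncomputable def maxPlusResidual (z : κ → ℝ) : EReal :=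
  ⨆ i, (p i - ⨆ j, (a i j + ((z j : ℝ) : EReal)))

lemma maxPlusResidual_le_add_of_le_add {z w : κ → ℝ} {s : ℝ} (hzw : ∀ j, z j ≤ w j + s) :
    maxPlusResidual a p w ≤ maxPlusResidual a p z + s := by
  refine iSup_le fun i => ?_
  have hrow : (⨆ j, (a i j + ((z j : ℝ) : EReal))) ≤ (⨆ j, (a i j + ((w j : ℝ) : EReal))) + s :=
    iSup_le fun j => calc
      a i j + ((z j : ℝ) : EReal) ≤ a i j + ((w j : ℝ) : EReal) + s := by
        rw [add_assoc, ← EReal.coe_add]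
        gcongr
        exact_mod_cast hzw j
      _ ≤ (⨆ j, (a i j + ((w j : ℝ) : EReal))) + s := by gcongr; exact le_iSup_of_le j le_rfl
  calc p i - ⨆ j, (a i j + ((w j : ℝ) : EReal))
      = p i - ((⨆ j, (a i j + ((w j : ℝ) : EReal))) + s) + s :=
        (EReal.sub_add_coe_add_coe _ _ s).symm
    _ ≤ p i - (⨆ j, (a i j + ((z j : ℝ) : EReal))) + s := by
        gcongr
        exact EReal.sub_le_sub le_rfl hrow
    _ ≤ maxPlusResidual a p z + s := by gcongr; exact le_iSup_of_le i le_rfl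

lemma maxPlusResidual_antitone : Antitone (maxPlusResidual (κ := κ) a p) := fun z w hzw => by
  simpa using maxPlusResidual_le_add_of_le_add a p (s := 0) fun j => by simpa using hzw j

end Residual

lemma tropObj_eq_add_maxPlusResidual (m n : ℕ) (a : Matrix (Fin m) (Fin n) EReal)
    (p : Fin m → EReal) (q x : Fin n → ℝ) :
    tropObj m n a p q x = (⨆ j, ((x j - q j : ℝ) : EReal)) + maxPlusResidual a p x :=
  rfl

lemma tropDelta_eq_maxPlusResidual (m n : ℕ) (a : Matrix (Fin m) (Fin n) EReal)
    (p : Fin m → EReal) (q : Fin n → ℝ) : tropDelta m n a p q = maxPlusResidual a p q :=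
  rfl

lemma tropDelta_le_tropObj (m n : ℕ) [NeZero n] (a : Matrix (Fin m) (Fin n) EReal)
    (p : Fin m → EReal) (q x : Fin n → ℝ) : tropDelta m n a p q ≤ tropObj m n a p q x := by
  obtain ⟨j₀, hj₀⟩ := Finite.exists_max fun j => x j - q j
  have hx : ∀ j, x j ≤ q j + (x j₀ - q j₀) := fun j => by linarith [hj₀ j]
  rw [tropDelta_eq_maxPlusResidual, tropObj_eq_add_maxPlusResidual, add_comm]
  calc maxPlusResidual a p q ≤ maxPlusResidual a p x + ((x j₀ - q j₀ : ℝ) : EReal) :=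
        maxPlusResidual_le_add_of_le_add a p hx
    _ ≤ maxPlusResidual a p x + ⨆ j, ((x j - q j : ℝ) : EReal) := by
        gcongr; exact le_iSup_of_le j₀ le_rfl

lemma iSup_coe_sup_sub {κ : Type*} (x y q : κ → ℝ) :
    (⨆ j, (((x ⊔ y) j - q j : ℝ) : EReal)) =
      (⨆ j, ((x j - q j : ℝ) : EReal)) ⊔ ⨆ j, ((y j - q j : ℝ) : EReal) := by
  rw [← iSup_sup_eq]
  congr 1 with j
  rw [Pi.sup_apply, ← EReal.coe_strictMono.monotone.map_max, max_sub_sub_right]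

lemma tropObj_sup_le (m n : ℕ) (a : Matrix (Fin m) (Fin n) EReal)
    (p : Fin m → EReal) (q x y : Fin n → ℝ) :
    tropObj m n a p q (x ⊔ y) ≤ max (tropObj m n a p q x) (tropObj m n a p q y) := by
  simp only [tropObj_eq_add_maxPlusResidual, iSup_coe_sup_sub]
  have hRx := maxPlusResidual_antitone a p (le_sup_left : x ≤ x ⊔ y)
  have hRy := maxPlusResidual_antitone a p (le_sup_right : y ≤ x ⊔ y)
  rcases le_total (⨆ j, ((x j - q j : ℝ) : EReal)) (⨆ j, ((y j - q j : ℝ) : EReal)) with h | h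
  · rw [sup_eq_right.2 h]
    exact le_max_of_le_right (by gcongr)
  · rw [sup_eq_left.2 h]
    exact le_max_of_le_left (by gcongr)

theorem tropObj_closed_under_sup_general (m n : ℕ) (a : Matrix (Fin m) (Fin n) EReal)
    (p : Fin m → EReal)
    (q : Fin n → ℝ) (x y : Fin n → ℝ)
    (hx : tropObj m n a p q x = tropDelta m n a p q)
    (hy : tropObj m n a p q y = tropDelta m n a p q) :
    tropObj m n a p q (fun i => max (x i) (y i)) = tropDelta m n a p q := by
  -- for `n = 0` the lower bound fails (`S = ⊥`), but then `x ∨ y = x`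
  rcases eq_zero_or_neZero n with rfl | _
  · rwa [Subsingleton.elim (fun i => max (x i) (y i)) x]
  refine le_antisymm ?_ (tropDelta_le_tropObj m n a p q _)
  calc tropObj m n a p q (x ⊔ y) ≤ max (tropObj m n a p q x) (tropObj m n a p q y) :=
        tropObj_sup_le m n a p q x y
    _ = tropDelta m n a p q := by rw [hx, hy, max_self]

/-- Closure under tropical addition: if `x` and `y` both attain the minimum `Δ`, then so
does the componentwise maximum `x ⊕ y`. -/
theorem tropObj_closed_under_sup (m n : ℕ) (a : Matrix (Fin m) (Fin n) EReal)
    (hatop : ∀ i j, a i j ≠ ⊤) (harow : ∀ i, ∃ j, a i j ≠ ⊥)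
    (p : Fin m → EReal) (hptop : ∀ i, p i ≠ ⊤) (hp : ∃ i, p i ≠ ⊥)
    (q : Fin n → ℝ) (x y : Fin n → ℝ)
    (hx : tropObj m n a p q x = tropDelta m n a p q)
    (hy : tropObj m n a p q y = tropDelta m n a p q) :
    tropObj m n a p q (fun i => max (x i) (y i)) = tropDelta m n a p q :=
  tropObj_closed_under_sup_general m n a p q x y hx hy
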